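/- arXiv:2010.08293 — 3 statements merged into one kernel-verified Lean document; each statement's English description precedes it below -/
import Mathlib

section
/- Fix p ≥ 1 and a positive integer n with 1 ≤ n ≤ p, and let X be an L^p random variable with n-th cumulant κ_n(X) = (−i)^n (d^n/dz^n) log E[e^{izX}] at z = 0. Then the map L^p ∋ X ↦ κ_n(X) ∈ ℝ is continuous with respect to the L^p norm; more precisely, κ_n(X) is a fixed polynomial function of the moments E[X^m], m ≤ n, and each map L^n ∋ X ↦ E[X^m] ∈ ℝ for m ≤ n is continuous. -/
/-!
Write `φ` for the characteristic function of `X`. Near `0`, `φ' = (log φ)' φ`, and Leibniz's rule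
at `0` turns this into the moment–cumulant recursion
`E[X^(j+1)] = ∑_{k ≤ j} (j choose k) κ_(k+1) E[X^(j-k)]`, which determines each `κ_j`, `j ≤ n`, as
one polynomial in `E[X], …, E[X^n]`, the same for every `X`.
The moments are continuous on `L^m` because `X^m - Y^m = (X - Y) ∑_{i<m} X^i Y^(m-1-i)`, whose
second factor Hölder's inequality bounds in `L^(m/(m-1))` by `m (‖X‖_m + ‖Y‖_m)^(m-1)`; on a
probability space the `L^p` norm dominates the `L^m` norm for `m ≤ p`. The cumulant, a polynomial
in continuous functions of `X`, is then continuous.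
-/

open MeasureTheory Finset

/-- The `n`-th cumulant `κ_n = (−i)^n (d^n/dz^n) log E[e^{izX}]` at `z = 0`. -/
noncomputable def cumulant {Ω : Type*} [MeasurableSpace Ω] (μ : Measure Ω) (X : Ω → ℝ)
    (n : ℕ) : ℂ :=
  (-Complex.I) ^ n *
    iteratedDeriv n (fun z : ℝ => Complex.log (∫ ω, Complex.exp (Complex.I * z * X ω) ∂μ)) 0

open Filter Topology Complex
open scoped ENNReal

section CumulantOfMoments

variable {R S : Type*} [CommRing R] [CommRing S]

/-- The moment–cumulant recursion `M (j + 1) = ∑_{k ≤ j} (j choose k) κ (k + 1) M (j - k)`,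
solved for `κ (j + 1)`. -/
def cumulantOfMoments (M : ℕ → R) : ℕ → R
  | 0 => 0
  | j + 1 => M (j + 1) - ∑ k : Fin j, (j.choose k : R) * cumulantOfMoments M (k + 1) * M (j - k)

theorem cumulantOfMoments_zero {M : ℕ → R} : cumulantOfMoments M 0 = 0 := by
  rw [cumulantOfMoments]

theorem cumulantOfMoments_succ {M : ℕ → R} {j : ℕ} : cumulantOfMoments M (j + 1) =
    M (j + 1) - ∑ k : Fin j, (j.choose k : R) * cumulantOfMoments M (k + 1) * M (j - k) := by
  rw [cumulantOfMoments]

theorem map_cumulantOfMoments (f : R →+* S) (M : ℕ → R) (j : ℕ) :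
    f (cumulantOfMoments M j) = cumulantOfMoments (f ∘ M) j := by
  induction j using Nat.strong_induction_on with
  | _ j ih =>
    cases j with
    | zero => rw [cumulantOfMoments_zero, cumulantOfMoments_zero, map_zero]
    | succ j =>
      rw [cumulantOfMoments_succ, cumulantOfMoments_succ]
      simp only [map_sub, map_sum, map_mul, map_natCast, Function.comp_apply]
      congr 1
      exact sum_congr rfl fun k _ => by rw [ih (k + 1) (by omega)]

theorem cumulantOfMoments_congr {M M' : ℕ → R} {j : ℕ} (h : ∀ k ≤ j, M k = M' k) :
    cumulantOfMoments M j = cumulantOfMoments M' j := by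
  induction j using Nat.strong_induction_on with
  | _ j ih =>
    cases j with
    | zero => simp only [cumulantOfMoments_zero]
    | succ j =>
      rw [cumulantOfMoments_succ, cumulantOfMoments_succ, h (j + 1) le_rfl]
      refine congrArg _ (sum_congr rfl fun k _ => ?_)
      rw [ih (k + 1) (by omega) fun i hi => h i (by omega), h (j - k) (by omega)]

theorem eq_cumulantOfMoments {M K : ℕ → R} {N : ℕ} (hM : M 0 = 1) (hK : K 0 = 0)
    (hrec : ∀ j < N,
      M (j + 1) = ∑ k ∈ range (j + 1), (j.choose k : R) * K (k + 1) * M (j - k)) :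
    ∀ j ≤ N, K j = cumulantOfMoments M j := by
  intro j
  induction j using Nat.strong_induction_on with
  | _ j ih =>
    cases j with
    | zero => exact fun _ => hK.trans cumulantOfMoments_zero.symm
    | succ j =>
      intro hj
      have h := hrec j hj
      rw [sum_range_succ, Nat.choose_self, Nat.sub_self, hM, ← Fin.sum_univ_eq_sum_range] at h
      rw [cumulantOfMoments_succ]
      have hsum : ∑ k : Fin j, (j.choose k : R) * K (k + 1) * M (j - k) =
          ∑ k : Fin j, (j.choose k : R) * cumulantOfMoments M (k + 1) * M (j - k) :=
        sum_congr rfl fun k _ => by rw [ih (k + 1) (by omega) (by omega)]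
      rw [← hsum, h]
      push_cast
      ring

variable (R) in
/-- The variable `m : Fin n` stands for the moment of order `m + 1`, and `1` for the moment of
order `0` (and, as junk, for orders above `n`). -/
noncomputable def momentPoly (n k : ℕ) : MvPolynomial (Fin n) R :=
  if h : 0 < k ∧ k ≤ n then MvPolynomial.X ⟨k - 1, by omega⟩ else 1

theorem eval_momentPoly {n k : ℕ} {M : ℕ → R} (hM : M 0 = 1) (hk : k ≤ n) :
    MvPolynomial.eval (fun m : Fin n => M (m + 1)) (momentPoly R n k) = M k := by
  rcases Nat.eq_zero_or_pos k with rfl | hk0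
  · simp [momentPoly, hM]
  · rw [momentPoly, dif_pos ⟨hk0, hk⟩, MvPolynomial.eval_X, Nat.sub_add_cancel hk0]

variable (R) in
noncomputable def cumulantPoly (n : ℕ) : MvPolynomial (Fin n) R :=
  cumulantOfMoments (momentPoly R n) n

theorem cumulantOfMoments_eq_eval_cumulantPoly {M : ℕ → R} (hM : M 0 = 1) (n : ℕ) :
    cumulantOfMoments M n = MvPolynomial.eval (fun m : Fin n => M (m + 1)) (cumulantPoly R n) := by
  rw [cumulantPoly, map_cumulantOfMoments]
  exact cumulantOfMoments_congr fun k hk => (eval_momentPoly hM hk).symm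

end CumulantOfMoments

theorem iteratedDeriv_succ_eq_sum_iteratedDeriv_log {f : ℝ → ℂ} {x : ℝ} {j : ℕ}
    (hf : ContDiff ℝ (j + 1) f) (hx : f x ∈ slitPlane) :
    iteratedDeriv (j + 1) f x = ∑ k ∈ range (j + 1), (j.choose k : ℂ) *
      iteratedDeriv (k + 1) (fun y => log (f y)) x * iteratedDeriv (j - k) f x := by
  have hslit : ∀ᶠ y in 𝓝 x, f y ∈ slitPlane :=
    hf.continuous.continuousAt.preimage_mem_nhds (isOpen_slitPlane.mem_nhds hx)
  have hlogDeriv : deriv (fun y => log (f y)) =ᶠ[𝓝 x] fun y => deriv f y * (f y)⁻¹ :=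
    hslit.mono fun y hy =>
      (((hf.differentiable (by simp)).differentiableAt.hasDerivAt.clog_real hy).deriv.trans
        (div_eq_mul_inv _ _))
  have hderiv : deriv f =ᶠ[𝓝 x] fun y => deriv f y * (f y)⁻¹ * f y :=
    hslit.mono fun y hy => (inv_mul_cancel_right₀ (slitPlane_ne_zero hy) _).symm
  have hquot : ContDiffAt ℝ j (fun y => deriv f y * (f y)⁻¹) x :=
    hf.deriv'.contDiffAt.mul
      ((hf.of_le (by norm_cast; omega)).contDiffAt.inv (slitPlane_ne_zero hx))
  rw [iteratedDeriv_succ', hderiv.iteratedDeriv_eq,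
    iteratedDeriv_fun_mul hquot (hf.of_le (by simp)).contDiffAt]
  refine sum_congr rfl fun k _ => ?_
  rw [iteratedDeriv_succ', hlogDeriv.iteratedDeriv_eq]

section Cumulant

variable {Ω : Type*} [MeasurableSpace Ω] {μ : Measure Ω} {X : Ω → ℝ}

theorem cumulant_eq_iteratedDeriv_log_charFun (hX : AEMeasurable X μ) (n : ℕ) :
    cumulant μ X n = (-I) ^ n * iteratedDeriv n (fun t => log (charFun (μ.map X) t)) 0 := by
  have hchar : (fun t : ℝ => log (∫ ω, exp (I * t * X ω) ∂μ)) =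
      fun t => log (charFun (μ.map X) t) := by
    ext t
    rw [charFun_apply_real, integral_map hX (by fun_prop)]
    simp only [mul_comm, mul_left_comm]
  rw [cumulant, hchar]

@[simp]
theorem cumulant_zero [IsProbabilityMeasure μ] : cumulant μ X 0 = 0 := by
  simp [cumulant]

theorem iteratedDeriv_charFun_map_zero [IsFiniteMeasure μ] {k : ℕ} (hX : MemLp X k μ) :
    iteratedDeriv k (charFun (μ.map X)) 0 = I ^ k * ((∫ ω, X ω ^ k ∂μ : ℝ) : ℂ) := by
  have hmap : MemLp id k (μ.map X) :=
    (memLp_map_measure_iff aestronglyMeasurable_id hX.aestronglyMeasurable.aemeasurable).2 hX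
  rw [iteratedDeriv_charFun_zero hmap, integral_map hX.aestronglyMeasurable.aemeasurable
    (by fun_prop), ← integral_complex_ofReal]

theorem moment_eq_sum_cumulant [IsProbabilityMeasure μ] {n : ℕ} (hX : MemLp X n μ) {j : ℕ}
    (hj : j < n) :
    ((∫ ω, X ω ^ (j + 1) ∂μ : ℝ) : ℂ) = ∑ k ∈ range (j + 1),
      (j.choose k : ℂ) * cumulant μ X (k + 1) * ((∫ ω, X ω ^ (j - k) ∂μ : ℝ) : ℂ) := by
  have hXm := hX.aestronglyMeasurable.aemeasurable
  have : IsProbabilityMeasure (μ.map X) := Measure.isProbabilityMeasure_map hXm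
  have hmom (k : ℕ) (hk : k ≤ n) := iteratedDeriv_charFun_map_zero (k := k)
    (hX.mono_exponent (by exact_mod_cast hk))
  have hlog (k : ℕ) : iteratedDeriv k (fun t => log (charFun (μ.map X) t)) 0 =
      I ^ k * cumulant μ X k := by
    rw [cumulant_eq_iteratedDeriv_log_charFun hXm, ← mul_assoc, ← mul_pow]
    simp
  have hsmooth : ContDiff ℝ (j + 1) (charFun (μ.map X)) := by
    exact_mod_cast contDiff_charFun ((memLp_map_measure_iff aestronglyMeasurable_id hXm).2
      (hX.mono_exponent (by exact_mod_cast hj)))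
  have h := iteratedDeriv_succ_eq_sum_iteratedDeriv_log (x := 0) hsmooth (by simp)
  rw [hmom (j + 1) hj] at h
  refine mul_left_cancel₀ (pow_ne_zero (j + 1) I_ne_zero) (h.trans ?_)
  rw [mul_sum]
  refine sum_congr rfl fun k hk => ?_
  rw [hlog, hmom (j - k) (by omega)]
  have hpow : I ^ (j + 1) = I ^ (k + 1) * I ^ (j - k) := by
    rw [← pow_add]; congr 1; have := mem_range.1 hk; omega
  rw [hpow]
  ring

theorem cumulant_eq_cumulantOfMoments [IsProbabilityMeasure μ] {n : ℕ} (hX : MemLp X n μ) :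
    cumulant μ X n = cumulantOfMoments (fun k => ((∫ ω, X ω ^ k ∂μ : ℝ) : ℂ)) n :=
  eq_cumulantOfMoments (by simp) cumulant_zero (fun _ hj => moment_eq_sum_cumulant hX hj) n le_rfl

theorem cumulant_eq_eval_cumulantPoly [IsProbabilityMeasure μ] {n : ℕ} (hX : MemLp X n μ) :
    cumulant μ X n =
      MvPolynomial.eval (fun m : Fin n => ∫ ω, X ω ^ ((m : ℕ) + 1) ∂μ) (cumulantPoly ℝ n) := by
  rw [cumulant_eq_cumulantOfMoments hX, ← cumulantOfMoments_eq_eval_cumulantPoly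
    (M := fun k => ∫ ω, X ω ^ k ∂μ) (by simp)]
  exact (map_cumulantOfMoments ofRealHom _ n).symm

end Cumulant

theorem abs_geom_sum₂_le (x y : ℝ) (m : ℕ) :
    |∑ i ∈ range m, x ^ i * y ^ (m - 1 - i)| ≤ m * (|x| + |y|) ^ (m - 1) := by
  have hterm (i : ℕ) (hi : i ∈ range m) : |x ^ i * y ^ (m - 1 - i)| ≤ (|x| + |y|) ^ (m - 1) := by
    have hi' : i + (m - 1 - i) = m - 1 := by have := mem_range.1 hi; omega
    rw [abs_mul, abs_pow, abs_pow]
    calc |x| ^ i * |y| ^ (m - 1 - i) ≤ (|x| + |y|) ^ i * (|x| + |y|) ^ (m - 1 - i) := by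
          gcongr <;> linarith [abs_nonneg x, abs_nonneg y]
      _ = (|x| + |y|) ^ (m - 1) := by rw [← pow_add, hi']
  calc |∑ i ∈ range m, x ^ i * y ^ (m - 1 - i)| ≤ ∑ i ∈ range m, |x ^ i * y ^ (m - 1 - i)| :=
        abs_sum_le_sum_abs _ _
    _ ≤ ∑ _i ∈ range m, (|x| + |y|) ^ (m - 1) := sum_le_sum hterm
    _ = m * (|x| + |y|) ^ (m - 1) := by rw [sum_const, card_range, nsmul_eq_mul]

theorem ENNReal.holderTriple_natCast_div {m : ℕ} (hm : m ≠ 0) :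
    ENNReal.HolderTriple m (m / (m - 1 : ℕ)) 1 := by
  constructor
  rw [ENNReal.inv_div (by simp) (.inr (by simpa using hm)), inv_one, inv_eq_one_div,
    ENNReal.div_add_div_same, ← Nat.cast_one (R := ℝ≥0∞), ← Nat.cast_add,
    Nat.add_sub_cancel' (Nat.one_le_iff_ne_zero.2 hm), Nat.cast_one,
    ENNReal.div_self (by simpa using hm) (by simp)]

section Moments

variable {Ω : Type*} [MeasurableSpace Ω] {μ : Measure Ω}

theorem eLpNorm_norm_pow_le {F : Type*} [NormedAddCommGroup F] (f : Ω → F) (p : ℝ≥0∞) (k : ℕ) :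
    eLpNorm (fun ω => ‖f ω‖ ^ k) (p / k) μ ≤ eLpNorm f p μ ^ k := by
  rcases Nat.eq_zero_or_pos k with rfl | hk
  · rcases eq_or_ne p 0 with rfl | hp
    · simp
    · rw [Nat.cast_zero, ENNReal.div_zero hp, pow_zero]
      simpa using eLpNorm_le_of_ae_bound (μ := μ) (p := ∞) (f := fun _ : Ω => (1 : ℝ))
        (C := 1) (by simp)
  · have h := eLpNorm_norm_rpow f (p := p / k) (μ := μ) (Nat.cast_pos.2 hk)
    rw [ENNReal.ofReal_natCast, ENNReal.div_mul_cancel (by simp; omega) (by simp),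
      ENNReal.rpow_natCast] at h
    simpa only [Real.rpow_natCast] using h.le

theorem MeasureTheory.MemLp.integrable_pow {X : Ω → ℝ} {m : ℕ} (hX : MemLp X m μ) (hm : m ≠ 0) :
    Integrable (fun ω => X ω ^ m) μ :=
  (hX.integrable_norm_pow hm).mono' (hX.aestronglyMeasurable.pow m)
    (.of_forall fun ω => by simp [norm_pow])

theorem enorm_integral_pow_sub_integral_pow_le {X Y : Ω → ℝ} {m : ℕ} (hm : m ≠ 0)
    (hX : MemLp X m μ) (hY : MemLp Y m μ) :
    ‖∫ ω, X ω ^ m ∂μ - ∫ ω, Y ω ^ m ∂μ‖ₑ ≤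
      m * eLpNorm (X - Y) m μ * (eLpNorm X m μ + eLpNorm Y m μ) ^ (m - 1) := by
  set T : Ω → ℝ := fun ω => ∑ i ∈ range m, X ω ^ i * Y ω ^ (m - 1 - i)
  have hfactor : (fun ω => X ω ^ m - Y ω ^ m) = fun ω => (X - Y) ω * T ω :=
    funext fun ω => by rw [Pi.sub_apply, mul_comm, geom_sum₂_mul]
  have hTmeas : AEStronglyMeasurable T μ := by
    have := hX.1; have := hY.1; fun_prop
  have hT : eLpNorm T (m / (m - 1 : ℕ)) μ ≤ m * (eLpNorm X m μ + eLpNorm Y m μ) ^ (m - 1) :=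
    calc eLpNorm T (m / (m - 1 : ℕ)) μ
        ≤ eLpNorm ((m : ℝ) • fun ω => ‖‖X ω‖ + ‖Y ω‖‖ ^ (m - 1)) (m / (m - 1 : ℕ)) μ :=
          eLpNorm_mono fun ω => by
            rw [Pi.smul_apply, norm_smul, norm_pow, norm_norm, Real.norm_natCast,
              Real.norm_of_nonneg (add_nonneg (norm_nonneg (X ω)) (norm_nonneg (Y ω)))]
            exact abs_geom_sum₂_le (X ω) (Y ω) m
      _ = m * eLpNorm (fun ω => ‖‖X ω‖ + ‖Y ω‖‖ ^ (m - 1)) (m / (m - 1 : ℕ)) μ := by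
          rw [eLpNorm_const_smul, Real.enorm_natCast]
      _ ≤ m * eLpNorm (fun ω => ‖X ω‖ + ‖Y ω‖) m μ ^ (m - 1) := by
          gcongr; exact eLpNorm_norm_pow_le _ _ _
      _ ≤ m * (eLpNorm X m μ + eLpNorm Y m μ) ^ (m - 1) := by
          gcongr
          exact (eLpNorm_add_le hX.1.norm hY.1.norm (mod_cast Nat.one_le_iff_ne_zero.2 hm)).trans_eq
            (by rw [eLpNorm_norm, eLpNorm_norm])
  have := ENNReal.holderTriple_natCast_div hm
  calc ‖∫ ω, X ω ^ m ∂μ - ∫ ω, Y ω ^ m ∂μ‖ₑ = ‖∫ ω, X ω ^ m - Y ω ^ m ∂μ‖ₑ := by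
        rw [integral_sub (hX.integrable_pow hm) (hY.integrable_pow hm)]
    _ ≤ eLpNorm (fun ω => X ω ^ m - Y ω ^ m) 1 μ := by
        rw [eLpNorm_one_eq_lintegral_enorm]; exact enorm_integral_le_lintegral_enorm _
    _ ≤ 1 * eLpNorm (X - Y) m μ * eLpNorm T (m / (m - 1 : ℕ)) μ := by
        rw [hfactor]
        exact eLpNorm_le_eLpNorm_mul_eLpNorm'_of_norm (hX.1.sub hY.1) hTmeas (· * ·) 1
          (.of_forall fun ω => by simp [norm_mul])
    _ ≤ m * eLpNorm (X - Y) m μ * (eLpNorm X m μ + eLpNorm Y m μ) ^ (m - 1) := by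
        rw [one_mul, mul_comm (m : ℝ≥0∞), mul_assoc]
        gcongr

section LpNhds

variable {E : Type*} [NormedAddCommGroup E] {p : ℝ≥0∞} {X : Ω → E}

noncomputable def lpNhds (p : ℝ≥0∞) (μ : Measure Ω) (X : Ω → E) : Filter (Ω → E) :=
  comap (fun Y => eLpNorm (X - Y) p μ) (𝓝 0) ⊓ 𝓟 {Y | MemLp Y p μ}

theorem tendsto_eLpNorm_sub_lpNhds :
    Tendsto (fun Y => eLpNorm (X - Y) p μ) (lpNhds p μ X) (𝓝 0) :=
  tendsto_comap.mono_left inf_le_left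

theorem eventually_memLp_lpNhds : ∀ᶠ Y in lpNhds p μ X, MemLp Y p μ :=
  mem_inf_of_right (mem_principal_self _)

theorem lpNhds_mono [IsProbabilityMeasure μ] {q : ℝ≥0∞} (hpq : p ≤ q)
    (hX : AEStronglyMeasurable X μ) : lpNhds q μ X ≤ lpNhds p μ X := by
  refine le_inf (tendsto_iff_comap.1 ?_) (le_principal_iff.2 ?_)
  · refine tendsto_of_tendsto_of_tendsto_of_le_of_le' tendsto_const_nhds
      tendsto_eLpNorm_sub_lpNhds (.of_forall fun _ => zero_le) ?_
    filter_upwards [eventually_memLp_lpNhds] with Y hY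
    exact eLpNorm_le_eLpNorm_of_exponent_le hpq (hX.sub hY.1)
  · filter_upwards [eventually_memLp_lpNhds] with Y hY
    exact hY.mono_exponent hpq

theorem Filter.Tendsto.exists_dist_lt_of_eLpNorm_sub_lt {β : Type*} [PseudoMetricSpace β]
    {F : (Ω → E) → β} (h : Tendsto F (lpNhds p μ X) (𝓝 (F X))) {ε : ℝ} (hε : 0 < ε) :
    ∃ δ > 0, ∀ Y, MemLp Y p μ → eLpNorm (X - Y) p μ < ENNReal.ofReal δ → dist (F X) (F Y) < ε := by
  have h := Metric.tendsto_nhds.1 h ε hε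
  rw [lpNhds, eventually_inf_principal,
    (ENNReal.nhds_zero_basis.comap _).eventually_iff] at h
  obtain ⟨a, ha, hball⟩ := h
  obtain ⟨δ, -, hδ, hδa⟩ := ENNReal.lt_iff_exists_real_btwn.1 ha
  exact ⟨δ, ENNReal.ofReal_pos.1 hδ, fun Y hY hXY =>
    dist_comm (F Y) (F X) ▸ hball (hXY.trans hδa) hY⟩

end LpNhds

theorem tendsto_integral_pow_lpNhds {X : Ω → ℝ} {m : ℕ} (hX : MemLp X m μ) :
    Tendsto (fun Y => ∫ ω, Y ω ^ m ∂μ) (lpNhds m μ X) (𝓝 (∫ ω, X ω ^ m ∂μ)) := by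
  rcases eq_or_ne m 0 with rfl | hm
  · simp_rw [pow_zero]
    exact tendsto_const_nhds
  have hC : (m : ℝ≥0∞) * (2 * eLpNorm X m μ + 1) ^ (m - 1) ≠ ∞ := by
    have := hX.2; finiteness
  have hdist := tendsto_eLpNorm_sub_lpNhds (p := m) (μ := μ) (X := X)
  rw [tendsto_iff_edist_tendsto_0]
  refine tendsto_of_tendsto_of_tendsto_of_le_of_le' tendsto_const_nhds
    (by simpa using ENNReal.Tendsto.const_mul hdist (.inr hC)) (.of_forall fun _ => zero_le) ?_
  filter_upwards [eventually_memLp_lpNhds, hdist.eventually (gt_mem_nhds zero_lt_one)]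
    with Y hY hXY
  have hYX : eLpNorm Y m μ ≤ eLpNorm X m μ + 1 := by
    calc eLpNorm Y m μ = eLpNorm (X - (X - Y)) m μ := by rw [sub_sub_cancel]
      _ ≤ eLpNorm X m μ + eLpNorm (X - Y) m μ :=
        eLpNorm_sub_le hX.1 (hX.1.sub hY.1) (mod_cast Nat.one_le_iff_ne_zero.2 hm)
      _ ≤ eLpNorm X m μ + 1 := by gcongr
  calc edist (∫ ω, Y ω ^ m ∂μ) (∫ ω, X ω ^ m ∂μ)
      = ‖∫ ω, X ω ^ m ∂μ - ∫ ω, Y ω ^ m ∂μ‖ₑ := by rw [edist_comm, edist_eq_enorm_sub]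
    _ ≤ m * eLpNorm (X - Y) m μ * (eLpNorm X m μ + eLpNorm Y m μ) ^ (m - 1) :=
        enorm_integral_pow_sub_integral_pow_le hm hX hY
    _ ≤ m * (2 * eLpNorm X m μ + 1) ^ (m - 1) * eLpNorm (X - Y) m μ := by
        rw [mul_right_comm]
        gcongr _ * ?_ ^ _ * _
        calc eLpNorm X m μ + eLpNorm Y m μ ≤ eLpNorm X m μ + (eLpNorm X m μ + 1) := by gcongr
          _ = 2 * eLpNorm X m μ + 1 := by ring

end Moments

theorem tendsto_cumulant_lpNhds {Ω : Type*} [MeasurableSpace Ω] {μ : Measure Ω}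
    [IsProbabilityMeasure μ] {p : ℝ≥0∞} {n : ℕ} (hnp : (n : ℝ≥0∞) ≤ p) {X : Ω → ℝ}
    (hX : MemLp X p μ) :
    Tendsto (fun Y => cumulant μ Y n) (lpNhds p μ X) (𝓝 (cumulant μ X n)) := by
  have hpoly : ∀ᶠ Y in lpNhds p μ X, ((MvPolynomial.eval (fun m : Fin n =>
      ∫ ω, Y ω ^ ((m : ℕ) + 1) ∂μ) (cumulantPoly ℝ n) : ℝ) : ℂ) = cumulant μ Y n :=
    eventually_memLp_lpNhds.mono fun Y hY =>
      (cumulant_eq_eval_cumulantPoly (hY.mono_exponent hnp)).symm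
  rw [cumulant_eq_eval_cumulantPoly (hX.mono_exponent hnp)]
  refine Tendsto.congr' hpoly ?_
  refine ((continuous_ofReal.comp (MvPolynomial.continuous_eval _)).tendsto _).comp
    (tendsto_pi_nhds.2 fun m => ?_)
  have hm : (((m : ℕ) + 1 : ℕ) : ℝ≥0∞) ≤ p := le_trans (by exact_mod_cast m.isLt) hnp
  exact (tendsto_integral_pow_lpNhds (hX.mono_exponent hm)).mono_left (lpNhds_mono hm hX.1)

theorem cumulant_continuous_general {Ω : Type*} [MeasurableSpace Ω] (μ : Measure Ω)
    [IsProbabilityMeasure μ] (p : ℝ) (n : ℕ) (hnp : (n : ℝ) ≤ p) :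
    (∃ Q : MvPolynomial (Fin n) ℝ, ∀ X : Ω → ℝ, MemLp X (ENNReal.ofReal p) μ →
      cumulant μ X n =
        ((MvPolynomial.eval fun m : Fin n => ∫ ω, X ω ^ ((m : ℕ) + 1) ∂μ) Q : ℝ)) ∧
    (∀ m : ℕ, m ≤ n → ∀ X : Ω → ℝ, MemLp X (ENNReal.ofReal (n : ℝ)) μ →
      ∀ ε > (0 : ℝ), ∃ δ > (0 : ℝ), ∀ Y : Ω → ℝ, MemLp Y (ENNReal.ofReal (n : ℝ)) μ →
        eLpNorm (X - Y) (ENNReal.ofReal (n : ℝ)) μ < ENNReal.ofReal δ →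
        |(∫ ω, X ω ^ m ∂μ) - ∫ ω, Y ω ^ m ∂μ| < ε) ∧
    (∀ X : Ω → ℝ, MemLp X (ENNReal.ofReal p) μ →
      ∀ ε > (0 : ℝ), ∃ δ > (0 : ℝ), ∀ Y : Ω → ℝ, MemLp Y (ENNReal.ofReal p) μ →
        eLpNorm (X - Y) (ENNReal.ofReal p) μ < ENNReal.ofReal δ →
        ‖cumulant μ X n - cumulant μ Y n‖ < ε) := by
  have hnp' : (n : ℝ≥0∞) ≤ ENNReal.ofReal p := by
    rw [← ENNReal.ofReal_natCast]; exact ENNReal.ofReal_le_ofReal hnp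
  refine ⟨⟨cumulantPoly ℝ n, fun X hX => cumulant_eq_eval_cumulantPoly (hX.mono_exponent hnp')⟩,
    fun m hm X hX ε hε => ?_, fun X hX ε hε => ?_⟩
  · rw [ENNReal.ofReal_natCast] at hX ⊢
    have hmn : (m : ℝ≥0∞) ≤ n := by exact_mod_cast hm
    simpa only [Real.dist_eq] using
      ((tendsto_integral_pow_lpNhds (hX.mono_exponent hmn)).mono_left
        (lpNhds_mono hmn hX.1)).exists_dist_lt_of_eLpNorm_sub_lt hε
  · simpa only [dist_eq_norm] using
      (tendsto_cumulant_lpNhds hnp' hX).exists_dist_lt_of_eLpNorm_sub_lt hε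

/-- The `n`-th cumulant is a fixed polynomial in the moments `E[X^m]`, `m ≤ n`; each
moment map is continuous on `L^n`; and `X ↦ κ_n(X)` is continuous on `L^p` (`n ≤ p`). -/
theorem cumulant_continuous {Ω : Type*} [MeasurableSpace Ω] (μ : Measure Ω)
    [IsProbabilityMeasure μ] (p : ℝ) (hp : 1 ≤ p) (n : ℕ) (hn : 1 ≤ n) (hnp : (n : ℝ) ≤ p) :
    (∃ Q : MvPolynomial (Fin n) ℝ, ∀ X : Ω → ℝ, MemLp X (ENNReal.ofReal p) μ →
      cumulant μ X n =
        ((MvPolynomial.eval fun m : Fin n => ∫ ω, X ω ^ ((m : ℕ) + 1) ∂μ) Q : ℝ)) ∧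
    (∀ m : ℕ, m ≤ n → ∀ X : Ω → ℝ, MemLp X (ENNReal.ofReal (n : ℝ)) μ →
      ∀ ε > (0 : ℝ), ∃ δ > (0 : ℝ), ∀ Y : Ω → ℝ, MemLp Y (ENNReal.ofReal (n : ℝ)) μ →
        eLpNorm (X - Y) (ENNReal.ofReal (n : ℝ)) μ < ENNReal.ofReal δ →
        |(∫ ω, X ω ^ m ∂μ) - ∫ ω, Y ω ^ m ∂μ| < ε) ∧
    (∀ X : Ω → ℝ, MemLp X (ENNReal.ofReal p) μ →
      ∀ ε > (0 : ℝ), ∃ δ > (0 : ℝ), ∀ Y : Ω → ℝ, MemLp Y (ENNReal.ofReal p) μ →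
        eLpNorm (X - Y) (ENNReal.ofReal p) μ < ENNReal.ofReal δ →
        ‖cumulant μ X n - cumulant μ Y n‖ < ε) :=
  cumulant_continuous_general μ p n hnp
end

section
/- Let n ≥ 1 and p ≥ n. For random variables (X_1, X_2, …, X_n) on a probability space with X_i ∈ L^{p/i} for each i = 1,…,n, the random variable B_n(X_1, X_2, …, X_n) belongs to L^{p/n}. Moreover, the map L^{p} × L^{p/2} × ⋯ × L^{p/n} ∋ (X_1,…,X_n) ↦ B_n(X_1,…,X_n) ∈ L^{p/n} is continuous. -/
open MeasureTheory Finset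

/-- The `n`-th complete Bell polynomial, defined as the `n`-th derivative at `z = 0` of
`exp (∑_{i=1}^n x_i z^i / i!)`.  Only `x 1, …, x n` are used. -/
noncomputable def bell (n : ℕ) (x : ℕ → ℝ) : ℝ :=
  iteratedDeriv n
    (fun z : ℝ => Real.exp (∑ i ∈ Finset.range n, x (i + 1) * z ^ (i + 1) / ((i + 1).factorial : ℝ))) 0

/-! Since `(exp ∘ g)' = g' · exp ∘ g`, Leibniz's rule gives the recursion
`B_{k+1} = ∑_{j ≤ k} C(k, j) x_{j+1} B_{k-j}`, `B_0 = 1`. As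
`(j + 1) / p + (k - j) / p = (k + 1) / p`, Hölder's inequality puts each term in `L^{p/(k+1)}`
once `x_{j+1} ∈ L^{p/(j+1)}` and `B_{k-j} ∈ L^{p/(k-j)}`, and bounds the distance between two
such products by the distances between their factors; induction on `k` gives both claims. -/

open Filter Topology
open scoped ENNReal

noncomputable def bellPoly : ℕ → (ℕ → ℝ) → ℝ
  | 0, _ => 1
  | k + 1, x => ∑ j ∈ range (k + 1), k.choose j * x (j + 1) * bellPoly (k - j) x
decreasing_by omega

theorem bellPoly_succ (k : ℕ) (x : ℕ → ℝ) :
    bellPoly (k + 1) x = ∑ j ∈ range (k + 1), k.choose j * x (j + 1) * bellPoly (k - j) x := by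
  rw [bellPoly]

theorem bellPoly_comp_succ {Ω : Type*} (k : ℕ) (X : ℕ → Ω → ℝ) :
    (fun ω => bellPoly (k + 1) fun i => X i ω) = ∑ j ∈ range (k + 1),
      (k.choose j : ℝ) • (X (j + 1) * fun ω => bellPoly (k - j) fun i => X i ω) := by
  ext ω
  simp [bellPoly_succ, mul_assoc]

open scoped ContDiff in
theorem iteratedDeriv_succ_exp_comp {g : ℝ → ℝ} (hg : ContDiff ℝ ∞ g) (k : ℕ) (x : ℝ) :
    iteratedDeriv (k + 1) (fun z => Real.exp (g z)) x = ∑ j ∈ range (k + 1),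
      k.choose j * iteratedDeriv (j + 1) g x *
        iteratedDeriv (k - j) (fun z => Real.exp (g z)) x := by
  have hderiv : deriv (fun z => Real.exp (g z)) = deriv g * fun z => Real.exp (g z) := by
    ext z
    rw [deriv_exp (hg.differentiable (by simp) z), Pi.mul_apply, mul_comm]
  rw [iteratedDeriv_succ', hderiv, iteratedDeriv_mul
    ((contDiff_infty_iff_deriv.mp hg).2.of_le (mod_cast le_top)).contDiffAt
    (hg.exp.of_le (mod_cast le_top)).contDiffAt]
  simp only [← iteratedDeriv_succ']

theorem iteratedDeriv_succ_bellExponent_zero {n j : ℕ} (hj : j < n) (x : ℕ → ℝ) :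
    iteratedDeriv (j + 1)
      (fun z : ℝ => ∑ i ∈ range n, x (i + 1) * z ^ (i + 1) / ((i + 1).factorial : ℝ)) 0 =
      x (j + 1) := by
  rw [iteratedDeriv_fun_sum fun i _ => by fun_prop]
  simp only [iteratedDeriv_div_const, iteratedDeriv_const_mul_field, iteratedDeriv_fun_pow_zero]
  rw [sum_eq_single_of_mem j (mem_range.mpr hj) fun i _ hij => by simp [hij.symm]]
  simp [(j + 1).factorial_ne_zero]

open scoped ContDiff in
theorem bell_eq_bellPoly (n : ℕ) (x : ℕ → ℝ) : bell n x = bellPoly n x := by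
  set g : ℝ → ℝ :=
    fun z => ∑ i ∈ range n, x (i + 1) * z ^ (i + 1) / ((i + 1).factorial : ℝ)
  have hg : ContDiff ℝ ∞ g := by fun_prop
  suffices ∀ k ≤ n, iteratedDeriv k (fun z => Real.exp (g z)) 0 = bellPoly k x from
    this n le_rfl
  intro k
  induction k using Nat.strong_induction_on with
  | _ k ih =>
    intro hk
    rcases k with _ | k
    · simp [g, bellPoly]
    rw [iteratedDeriv_succ_exp_comp hg, bellPoly_succ]
    refine sum_congr rfl fun j hj => ?_
    have hjk : j ≤ k := Nat.lt_succ_iff.mp (mem_range.mp hj)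
    rw [iteratedDeriv_succ_bellExponent_zero (by omega), ih (k - j) (by omega) (by omega)]

-- In `ℝ≥0∞`, `P / 0 = ∞`: the exponent of `B_0 = 1`.
theorem holderTriple_div_natCast {P : ℝ≥0∞} (hP : P ≠ 0) {a b c : ℕ} (h : a + b = c) :
    ENNReal.HolderTriple (P / a) (P / b) (P / c) := by
  have hinv (m : ℕ) : (P / m)⁻¹ = m / P :=
    ENNReal.inv_div (Or.inl (ENNReal.natCast_ne_top m)) (Or.inr hP)
  constructor
  rw [hinv, hinv, hinv, ← h, Nat.cast_add, ENNReal.div_add_div_same]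

section LpConvergence

variable {α Ω : Type*} [MeasurableSpace Ω] {μ : Measure Ω} {l : Filter α}

theorem tendsto_eLpNorm_add_nhds_zero {E : Type*} [NormedAddCommGroup E] {F G : α → Ω → E}
    {r : ℝ≥0∞} (hFm : ∀ᶠ a in l, AEStronglyMeasurable (F a) μ)
    (hGm : ∀ᶠ a in l, AEStronglyMeasurable (G a) μ)
    (hF : Tendsto (fun a => eLpNorm (F a) r μ) l (𝓝 0))
    (hG : Tendsto (fun a => eLpNorm (G a) r μ) l (𝓝 0)) :
    Tendsto (fun a => eLpNorm (F a + G a) r μ) l (𝓝 0) := by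
  have hbound : Tendsto
      (fun a => ENNReal.LpAddConst r * (eLpNorm (F a) r μ + eLpNorm (G a) r μ)) l (𝓝 0) := by
    simpa only [add_zero, mul_zero] using
      ENNReal.Tendsto.const_mul (hF.add hG) (Or.inr (ENNReal.LpAddConst_lt_top r).ne)
  refine tendsto_of_tendsto_of_tendsto_of_le_of_le' tendsto_const_nhds hbound
    (.of_forall fun _ => zero_le) ?_
  filter_upwards [hFm, hGm] with a hFa hGa using eLpNorm_add_le' hFa hGa r

theorem tendsto_eLpNorm_sum_nhds_zero {E ι : Type*} [NormedAddCommGroup E] {s : Finset ι}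
    {F : ι → α → Ω → E} {r : ℝ≥0∞}
    (hFm : ∀ᶠ a in l, ∀ i ∈ s, AEStronglyMeasurable (F i a) μ)
    (hF : ∀ i ∈ s, Tendsto (fun a => eLpNorm (F i a) r μ) l (𝓝 0)) :
    Tendsto (fun a => eLpNorm (∑ i ∈ s, F i a) r μ) l (𝓝 0) := by
  classical
  induction s using Finset.induction_on with
  | empty => simpa using tendsto_const_nhds
  | insert i s hi ih =>
    simp only [sum_insert hi]
    refine tendsto_eLpNorm_add_nhds_zero (hFm.mono fun a ha => ha i (mem_insert_self i s))
      (hFm.mono fun a ha => ?_) (hF i (mem_insert_self i s))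
      (ih (hFm.mono fun a ha j hj => ha j (mem_insert_of_mem hj))
        fun j hj => hF j (mem_insert_of_mem hj))
    exact Finset.aestronglyMeasurable_sum s fun j hj => ha j (mem_insert_of_mem hj)

theorem tendsto_eLpNorm_mul_nhds_zero {𝕜 : Type*} [NormedRing 𝕜] {p q r c : ℝ≥0∞}
    [ENNReal.HolderTriple p q r] {u v : α → Ω → 𝕜} (hc : c ≠ ∞)
    (hum : ∀ᶠ a in l, AEStronglyMeasurable (u a) μ)
    (hvm : ∀ᶠ a in l, AEStronglyMeasurable (v a) μ)
    (hu : Tendsto (fun a => eLpNorm (u a) p μ) l (𝓝 0))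
    (hv : Tendsto (fun a => eLpNorm (v a) q μ) l (𝓝 c)) :
    Tendsto (fun a => eLpNorm (u a * v a) r μ) l (𝓝 0) := by
  have hbound : Tendsto (fun a => eLpNorm (u a) p μ * eLpNorm (v a) q μ) l (𝓝 0) := by
    simpa only [zero_mul] using
      ENNReal.Tendsto.mul hu (Or.inr hc) hv (Or.inr ENNReal.zero_ne_top)
  refine tendsto_of_tendsto_of_tendsto_of_le_of_le' tendsto_const_nhds hbound
    (.of_forall fun _ => zero_le) ?_
  filter_upwards [hum, hvm] with a hua hva
  exact eLpNorm_smul_le_mul_eLpNorm (φ := u a) hva hua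

theorem tendsto_eLpNorm_mul_sub_mul {𝕜 : Type*} [NormedCommRing 𝕜] {p q r : ℝ≥0∞}
    [ENNReal.HolderTriple p q r] {f g : Ω → 𝕜} {F G : α → Ω → 𝕜}
    (hf : MemLp f p μ) (hg : MemLp g q μ)
    (hFm : ∀ᶠ a in l, AEStronglyMeasurable (F a) μ)
    (hGm : ∀ᶠ a in l, AEStronglyMeasurable (G a) μ)
    (hF : Tendsto (fun a => eLpNorm (f - F a) p μ) l (𝓝 0))
    (hG : Tendsto (fun a => eLpNorm (g - G a) q μ) l (𝓝 0)) :
    Tendsto (fun a => eLpNorm (f * g - F a * G a) r μ) l (𝓝 0) := by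
  have hfFm : ∀ᶠ a in l, AEStronglyMeasurable (f - F a) μ := hFm.mono fun _ h => hf.1.sub h
  have hFfm : ∀ᶠ a in l, AEStronglyMeasurable (F a - f) μ := hFm.mono fun _ h => h.sub hf.1
  have hgGm : ∀ᶠ a in l, AEStronglyMeasurable (g - G a) μ := hGm.mono fun _ h => hg.1.sub h
  have hFf : Tendsto (fun a => eLpNorm (F a - f) p μ) l (𝓝 0) := by
    simpa only [eLpNorm_sub_comm] using hF
  -- Three terms rather than two, so that no bound on `eLpNorm (G a) q μ` is needed.
  have hdecomp : ∀ a, f * g - F a * G a =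
      ((f - F a) * g + (g - G a) * f) + (F a - f) * (g - G a) := fun a => by ring
  simp only [hdecomp]
  refine tendsto_eLpNorm_add_nhds_zero ?_ ?_ (tendsto_eLpNorm_add_nhds_zero ?_ ?_
    (tendsto_eLpNorm_mul_nhds_zero hg.eLpNorm_ne_top hfFm (.of_forall fun _ => hg.1) hF
      tendsto_const_nhds)
    (tendsto_eLpNorm_mul_nhds_zero hf.eLpNorm_ne_top hgGm (.of_forall fun _ => hf.1) hG
      tendsto_const_nhds))
    (tendsto_eLpNorm_mul_nhds_zero ENNReal.zero_ne_top hFfm hgGm hFf hG)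
  · filter_upwards [hfFm, hgGm] with a h₁ h₂ using (h₁.mul hg.1).add (h₂.mul hf.1)
  · filter_upwards [hFfm, hgGm] with a h₁ h₂ using h₁.mul h₂
  · filter_upwards [hfFm] with a h using h.mul hg.1
  · filter_upwards [hgGm] with a h using h.mul hf.1

end LpConvergence

theorem tendsto_comap_finset_sup_nhds_zero {β ι : Type*} {s : Finset ι}
    {d : ι → β → ℝ≥0∞} {i : ι} (hi : i ∈ s) :
    Tendsto (d i) (comap (fun b => s.sup (d · b)) (𝓝 0)) (𝓝 0) :=
  tendsto_of_tendsto_of_tendsto_of_le_of_le tendsto_const_nhds tendsto_comap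
    (fun _ => zero_le) fun b => le_sup (f := (d · b)) hi

theorem exists_pos_forall_lt_of_tendsto_comap_sup {β ι : Type*} {s : Finset ι}
    {d : ι → β → ℝ≥0∞} {S : Set β} {φ : β → ℝ≥0∞}
    (h : Tendsto φ (comap (fun b => s.sup (d · b)) (𝓝 0) ⊓ 𝓟 S) (𝓝 0))
    {ε : ℝ≥0∞} (hε : 0 < ε) :
    ∃ δ > (0 : ℝ), ∀ b ∈ S, (∀ i ∈ s, d i b < ENNReal.ofReal δ) → φ b < ε := by
  obtain ⟨η, hη, hηε⟩ := (((ENNReal.nhds_zero_basis.comap _).inf_principal S).tendsto_iff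
    ENNReal.nhds_zero_basis).mp h ε hε
  obtain ⟨δ, -, hδ, hδη⟩ := ENNReal.lt_iff_exists_real_btwn.mp hη
  exact ⟨δ, ENNReal.ofReal_pos.mp hδ, fun b hb hd =>
    hηε b ⟨((Finset.sup_lt_iff hδ).mpr hd).trans hδη, hb⟩⟩

section BellLp

variable {Ω : Type*} [MeasurableSpace Ω] {μ : Measure Ω}

theorem memLp_bellPoly {P : ℝ≥0∞} (hP : P ≠ 0) {n : ℕ} {X : ℕ → Ω → ℝ}
    (hX : ∀ i, 1 ≤ i → i ≤ n → MemLp (X i) (P / i) μ) {k : ℕ} (hk : k ≤ n) :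
    MemLp (fun ω => bellPoly k fun i => X i ω) (P / k) μ := by
  induction k using Nat.strong_induction_on with
  | _ k ih =>
    rcases k with _ | k
    · simpa [bellPoly, ENNReal.div_zero hP] using memLp_top_const (μ := μ) (1 : ℝ)
    rw [bellPoly_comp_succ]
    refine memLp_finsetSum' _ fun j hj => ?_
    have hjk : j ≤ k := Nat.lt_succ_iff.mp (mem_range.mp hj)
    have := holderTriple_div_natCast hP (show j + 1 + (k - j) = k + 1 by omega)
    exact ((ih (k - j) (by omega) (by omega)).mul
      (hX (j + 1) (by omega) (by omega))).const_smul _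

theorem tendsto_eLpNorm_bellPoly_sub {α : Type*} {l : Filter α} {P : ℝ≥0∞} (hP : P ≠ 0)
    {n : ℕ} {X : ℕ → Ω → ℝ} {Y : α → ℕ → Ω → ℝ}
    (hX : ∀ i, 1 ≤ i → i ≤ n → MemLp (X i) (P / i) μ)
    (hY : ∀ᶠ a in l, ∀ i, 1 ≤ i → i ≤ n → MemLp (Y a i) (P / i) μ)
    (hXY : ∀ i, 1 ≤ i → i ≤ n →
      Tendsto (fun a => eLpNorm (X i - Y a i) (P / i) μ) l (𝓝 0))
    {k : ℕ} (hk : k ≤ n) :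
    Tendsto (fun a => eLpNorm ((fun ω => bellPoly k fun i => X i ω) -
      fun ω => bellPoly k fun i => Y a i ω) (P / k) μ) l (𝓝 0) := by
  induction k using Nat.strong_induction_on with
  | _ k ih =>
    rcases k with _ | k
    · simpa [bellPoly] using tendsto_const_nhds
    simp only [bellPoly_comp_succ, ← sum_sub_distrib, ← smul_sub]
    refine tendsto_eLpNorm_sum_nhds_zero ?_ fun j hj => ?_
    · filter_upwards [hY] with a ha j hj
      have hjk : j ≤ k := Nat.lt_succ_iff.mp (mem_range.mp hj)
      exact (((hX (j + 1) (by omega) (by omega)).1.mul (memLp_bellPoly hP hX (by omega)).1).sub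
        ((ha (j + 1) (by omega) (by omega)).1.mul
          (memLp_bellPoly hP ha (by omega)).1)).const_smul _
    have hjk : j ≤ k := Nat.lt_succ_iff.mp (mem_range.mp hj)
    have := holderTriple_div_natCast hP (show j + 1 + (k - j) = k + 1 by omega)
    simp only [eLpNorm_const_smul]
    simpa only [mul_zero] using ENNReal.Tendsto.const_mul (tendsto_eLpNorm_mul_sub_mul
      (hX (j + 1) (by omega) (by omega)) (memLp_bellPoly hP hX (k := k - j) (by omega))
      (hY.mono fun a ha => (ha (j + 1) (by omega) (by omega)).1)
      (hY.mono fun a ha => (memLp_bellPoly hP ha (k := k - j) (by omega)).1)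
      (hXY (j + 1) (by omega) (by omega)) (ih (k - j) (by omega) (by omega)))
      (Or.inr enorm_ne_top)

end BellLp

theorem bell_memLp_continuous_general {Ω : Type*} [MeasurableSpace Ω] (μ : Measure Ω)
    (n : ℕ) (hn : 1 ≤ n) (p : ℝ) (hp : (n : ℝ) ≤ p)
    (X : ℕ → Ω → ℝ) (hX : ∀ i, 1 ≤ i → i ≤ n → MemLp (X i) (ENNReal.ofReal (p / i)) μ) :
    MemLp (fun ω => bell n fun i => X i ω) (ENNReal.ofReal (p / n)) μ ∧
    ∀ ε > (0 : ℝ), ∃ δ > (0 : ℝ), ∀ Y : ℕ → Ω → ℝ,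
      (∀ i, 1 ≤ i → i ≤ n → MemLp (Y i) (ENNReal.ofReal (p / i)) μ) →
      (∀ i, 1 ≤ i → i ≤ n →
        eLpNorm (X i - Y i) (ENNReal.ofReal (p / i)) μ < ENNReal.ofReal δ) →
      eLpNorm ((fun ω => bell n fun i => X i ω) - fun ω => bell n fun i => Y i ω)
        (ENNReal.ofReal (p / n)) μ < ENNReal.ofReal ε := by
  have hp0 : 0 < p := by linarith [(Nat.one_le_cast (α := ℝ)).mpr hn]
  have hP : ENNReal.ofReal p ≠ 0 := (ENNReal.ofReal_pos.mpr hp0).ne'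
  have hexp (i : ℕ) (hi : 1 ≤ i) : ENNReal.ofReal (p / i) = ENNReal.ofReal p / i := by
    rw [ENNReal.ofReal_div_of_pos (by positivity), ENNReal.ofReal_natCast]
  set S := {Y : ℕ → Ω → ℝ | ∀ i, 1 ≤ i → i ≤ n → MemLp (Y i) (ENNReal.ofReal p / i) μ}
  set d := fun (i : ℕ) (Y : ℕ → Ω → ℝ) => eLpNorm (X i - Y i) (ENNReal.ofReal p / i) μ
  -- the neighbourhood filter of `X` in `L^p × L^{p/2} × ⋯ × L^{p/n}`
  set l := comap (fun Y => (Icc 1 n).sup (d · Y)) (𝓝 0) ⊓ 𝓟 S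
  have hXS : X ∈ S := fun i hi hin => hexp i hi ▸ hX i hi hin
  have hd (i : ℕ) (hi : 1 ≤ i) (hin : i ≤ n) : Tendsto (d i) l (𝓝 0) :=
    (tendsto_comap_finset_sup_nhds_zero (mem_Icc.mpr ⟨hi, hin⟩)).mono_left inf_le_left
  simp only [bell_eq_bellPoly, hexp n hn]
  refine ⟨memLp_bellPoly hP hXS le_rfl, fun ε hε => ?_⟩
  obtain ⟨δ, hδ, hclose⟩ := exists_pos_forall_lt_of_tendsto_comap_sup
    (tendsto_eLpNorm_bellPoly_sub hP hXS (eventually_inf_principal.mpr (.of_forall fun _ => id))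
      hd le_rfl) (ENNReal.ofReal_pos.mpr hε)
  refine ⟨δ, hδ, fun Y hY hXY =>
    hclose Y (fun i hi hin => hexp i hi ▸ hY i hi hin) fun i hi => ?_⟩
  obtain ⟨hi, hin⟩ := mem_Icc.mp hi
  simpa only [d, ← hexp i hi] using hXY i hi hin

/-- Lemma 1: if `X_i ∈ L^{p/i}` for `i = 1,…,n` (with `p ≥ n`) then
`B_n(X_1,…,X_n) ∈ L^{p/n}`, and the map `(X_1,…,X_n) ↦ B_n(X_1,…,X_n)` is continuous
from `L^p × L^{p/2} × ⋯ × L^{p/n}` to `L^{p/n}`. -/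
theorem bell_memLp_continuous {Ω : Type*} [MeasurableSpace Ω] (μ : Measure Ω)
    [IsProbabilityMeasure μ] (n : ℕ) (hn : 1 ≤ n) (p : ℝ) (hp : (n : ℝ) ≤ p)
    (X : ℕ → Ω → ℝ) (hX : ∀ i, 1 ≤ i → i ≤ n → MemLp (X i) (ENNReal.ofReal (p / i)) μ) :
    MemLp (fun ω => bell n fun i => X i ω) (ENNReal.ofReal (p / n)) μ ∧
    ∀ ε > (0 : ℝ), ∃ δ > (0 : ℝ), ∀ Y : ℕ → Ω → ℝ,
      (∀ i, 1 ≤ i → i ≤ n → MemLp (Y i) (ENNReal.ofReal (p / i)) μ) →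
      (∀ i, 1 ≤ i → i ≤ n →
        eLpNorm (X i - Y i) (ENNReal.ofReal (p / i)) μ < ENNReal.ofReal δ) →
      eLpNorm ((fun ω => bell n fun i => X i ω) - fun ω => bell n fun i => Y i ω)
        (ENNReal.ofReal (p / n)) μ < ENNReal.ofReal ε :=
  bell_memLp_continuous_general μ n hn p hp X hX
end

section
/- Let (Ω,ℱ,P,{ℱ_t}_{t∈[0,T]}) be a filtered probability space and let M = {M_t}_{t∈[0,T]} be a martingale with E[|M_T|^3] < ∞. For each t, set M^{(2)}_t = E[(M_T − M_t)^2 | ℱ_t]. Then for any partition 0 = t_0 < t_1 < ⋯ < t_N = T, the realized skewness satisfies E[ ∑_{j=1}^{N} { (M_{t_j} − M_{t_{j−1}})^3 + 3 (M_{t_j} − M_{t_{j−1}}) (M^{(2)}_{t_j} − M^{(2)}_{t_{j−1}}) } ] = E[(M_T − M_0)^3]. -/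
/-! Write `Δ = M_b - M_a` and `X = M_T - M_b` for consecutive partition points `a ≤ b`, so that
`(M_T - M_a)³ = Δ³ + 3 Δ X² + 3 Δ² X + X³`. The tower property gives `E[Δ M⁽²⁾_b] = E[Δ X²]`,
while `E[Δ M⁽²⁾_a] = 0` and `E[Δ² X] = 0` because `Δ` and `X` have zero conditional mean given
`ℱ_a` and `ℱ_b`. Hence each summand has expectation `E[(M_T - M_a)³] - E[(M_T - M_b)³]` and the
sum telescopes. Hölder's inequality with exponents `3` and `3/2` makes every product integrable;
`M⁽²⁾` lies in `L^{3/2}` since conditional expectation contracts `L^p`. -/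

open MeasureTheory Finset

open scoped ENNReal

instance ENNReal.holderTriple_three_three : ENNReal.HolderTriple 3 3 (3 / 2) :=
  ⟨by rw [ENNReal.inv_div (by norm_num) (by norm_num), ← one_div, ENNReal.div_add_div_same,
    one_add_one_eq_two]⟩

instance ENNReal.holderConjugate_three_three_div_two : ENNReal.HolderConjugate 3 (3 / 2) :=
  ⟨by rw [ENNReal.inv_div (by norm_num) (by norm_num), ← one_div, ENNReal.div_add_div_same,
    inv_one, show (1 + 2 : ℝ≥0∞) = 3 by norm_num, ENNReal.div_self (by norm_num) (by norm_num)]⟩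

theorem ENNReal.one_le_three_div_two : (1 : ℝ≥0∞) ≤ 3 / 2 := by
  rw [ENNReal.le_div_iff_mul_le] <;> norm_num

namespace MeasureTheory

variable {Ω : Type*} {m m' m0 : MeasurableSpace Ω} {μ : Measure Ω}

theorem MemLp.sq_of_three {f : Ω → ℝ} (hf : MemLp f 3 μ) :
    MemLp (fun ω => f ω ^ 2) (3 / 2) μ := by
  simpa only [sq] using hf.mul' hf (r := 3 / 2)

theorem MemLp.integrable_pow_three {f : Ω → ℝ} (hf : MemLp f 3 μ) :
    Integrable (fun ω => f ω ^ 3) μ :=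
  (hf.sq_of_three.integrable_mul hf).congr (.of_forall fun ω => (pow_succ (f ω) 2).symm)

theorem MemLp.condExp_sq_of_three {f : Ω → ℝ} (hf : MemLp f 3 μ) :
    MemLp (μ[fun ω => f ω ^ 2|m]) (3 / 2) μ :=
  hf.sq_of_three.condExp ENNReal.one_le_three_div_two

theorem integral_mul_condExp_of_stronglyMeasurable (hm : m ≤ m0) [SigmaFinite (μ.trim hm)]
    {f g : Ω → ℝ} (hf : StronglyMeasurable[m] f) (hfg : Integrable (fun ω => f ω * g ω) μ)
    (hg : Integrable g μ) : ∫ ω, f ω * (μ[g|m]) ω ∂μ = ∫ ω, f ω * g ω ∂μ :=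
  (integral_congr_ae (condExp_mul_of_stronglyMeasurable_left hf hfg hg)).symm.trans
    (integral_condExp hm)

theorem integral_mul_eq_zero_of_condExp_eq_zero (hm : m ≤ m0) [SigmaFinite (μ.trim hm)]
    {f g : Ω → ℝ} (hf : StronglyMeasurable[m] f) (hfg : Integrable (fun ω => f ω * g ω) μ)
    (hg : Integrable g μ) (hg0 : μ[g|m] =ᵐ[μ] 0) : ∫ ω, f ω * g ω ∂μ = 0 := by
  rw [← integral_mul_condExp_of_stronglyMeasurable hm hf hfg hg, integral_congr_ae
    (hg0.mono fun ω hω => by rw [hω, Pi.zero_apply, mul_zero]), integral_zero]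

theorem integrable_cube_add_mul_sub_condExp {Δ X : Ω → ℝ} (hΔ : MemLp Δ 3 μ) (hX : MemLp X 3 μ) :
    Integrable (fun ω => Δ ω ^ 3 + 3 * Δ ω *
      ((μ[fun ω => X ω ^ 2|m']) ω - (μ[fun ω => (Δ ω + X ω) ^ 2|m]) ω)) μ := by
  have hΔGb := hΔ.integrable_mul (hX.condExp_sq_of_three (m := m'))
  have hΔGa := hΔ.integrable_mul ((hΔ.add hX).condExp_sq_of_three (m := m))
  refine (hΔ.integrable_pow_three.add ((hΔGb.const_mul 3).sub (hΔGa.const_mul 3))).congr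
    (.of_forall fun ω => ?_)
  simp only [Pi.add_apply, Pi.sub_apply, Pi.mul_apply]
  ring

theorem integral_cube_add_mul_sub_condExp [IsFiniteMeasure μ] (hm : m ≤ m0) (hm' : m' ≤ m0)
    {Δ X : Ω → ℝ} (hΔm : StronglyMeasurable[m'] Δ) (hΔ : MemLp Δ 3 μ) (hX : MemLp X 3 μ)
    (hΔ0 : μ[Δ|m] =ᵐ[μ] 0) (hX0 : μ[X|m'] =ᵐ[μ] 0) :
    ∫ ω, (Δ ω ^ 3 + 3 * Δ ω *
      ((μ[fun ω => X ω ^ 2|m']) ω - (μ[fun ω => (Δ ω + X ω) ^ 2|m]) ω)) ∂μ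
      = ∫ ω, (Δ ω + X ω) ^ 3 ∂μ - ∫ ω, X ω ^ 3 ∂μ := by
  set Gb := μ[fun ω => X ω ^ 2|m']
  set Ga := μ[fun ω => (Δ ω + X ω) ^ 2|m]
  have hΔGb : Integrable (fun ω => Δ ω * Gb ω) μ :=
    hΔ.integrable_mul hX.condExp_sq_of_three
  have hΔGa : Integrable (fun ω => Δ ω * Ga ω) μ :=
    hΔ.integrable_mul (hΔ.add hX).condExp_sq_of_three
  have hΔX2 : Integrable (fun ω => Δ ω * X ω ^ 2) μ := hΔ.integrable_mul hX.sq_of_three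
  have hΔ2X : Integrable (fun ω => Δ ω ^ 2 * X ω) μ := hΔ.sq_of_three.integrable_mul hX
  have hΔ3 := hΔ.integrable_pow_three
  have hX3 := hX.integrable_pow_three
  have hbGb : ∫ ω, Δ ω * Gb ω ∂μ = ∫ ω, Δ ω * X ω ^ 2 ∂μ :=
    integral_mul_condExp_of_stronglyMeasurable hm' hΔm hΔX2
      (hX.sq_of_three.integrable ENNReal.one_le_three_div_two)
  have haGa : ∫ ω, Δ ω * Ga ω ∂μ = 0 := by
    simp_rw [mul_comm (Δ _)]
    exact integral_mul_eq_zero_of_condExp_eq_zero hm stronglyMeasurable_condExp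
      (by simpa only [mul_comm] using hΔGa) (hΔ.integrable (by norm_num)) hΔ0
  have hcross : ∫ ω, Δ ω ^ 2 * X ω ∂μ = 0 :=
    integral_mul_eq_zero_of_condExp_eq_zero hm' (hΔm.pow 2) hΔ2X (hX.integrable (by norm_num))
      hX0
  calc ∫ ω, (Δ ω ^ 3 + 3 * Δ ω * (Gb ω - Ga ω)) ∂μ
      = ∫ ω, (Δ ω ^ 3 + 3 * (Δ ω * Gb ω) - 3 * (Δ ω * Ga ω)) ∂μ := by
        congr 1 with ω
        ring
    _ = ∫ ω, Δ ω ^ 3 ∂μ + 3 * ∫ ω, Δ ω * Gb ω ∂μ - 3 * ∫ ω, Δ ω * Ga ω ∂μ := by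
        rw [integral_sub ?_ (hΔGa.const_mul 3), integral_add hΔ3 (hΔGb.const_mul 3),
          integral_const_mul, integral_const_mul]
        exact hΔ3.add (hΔGb.const_mul 3)
    _ = ∫ ω, Δ ω ^ 3 ∂μ + 3 * ∫ ω, Δ ω * X ω ^ 2 ∂μ + 3 * ∫ ω, Δ ω ^ 2 * X ω ∂μ := by
        rw [hbGb, haGa, hcross, mul_zero, sub_zero, add_zero]
    _ = ∫ ω, (Δ ω ^ 3 + 3 * (Δ ω * X ω ^ 2) + 3 * (Δ ω ^ 2 * X ω) + X ω ^ 3) ∂μ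
          - ∫ ω, X ω ^ 3 ∂μ := by
        rw [integral_add ?_ hX3, integral_add ?_ (hΔ2X.const_mul 3),
          integral_add hΔ3 (hΔX2.const_mul 3), integral_const_mul, integral_const_mul,
          add_sub_cancel_right]
        · exact hΔ3.add (hΔX2.const_mul 3)
        · exact (hΔ3.add (hΔX2.const_mul 3)).add (hΔ2X.const_mul 3)
    _ = ∫ ω, (Δ ω + X ω) ^ 3 ∂μ - ∫ ω, X ω ^ 3 ∂μ := by
        congr 2 with ω
        ring

section Martingale

variable {ι : Type*} [Preorder ι] {F : Filtration ι m0} {M : ι → Ω → ℝ} {s t : ι}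

theorem Martingale.condExp_sub_ae_eq_zero (hM : Martingale M F μ) (hst : s ≤ t) :
    μ[M t - M s|F s] =ᵐ[μ] 0 := by
  filter_upwards [condExp_sub (m := F s) (hM.integrable t) (hM.integrable s),
    hM.condExp_ae_eq hst, hM.condExp_ae_eq le_rfl] with ω hω hωt hωs
  rw [hω, Pi.sub_apply, hωt, hωs, Pi.zero_apply, sub_self]

theorem Martingale.memLp_of_le {p : ℝ≥0∞} (hM : Martingale M F μ) (hst : s ≤ t) (hp : 1 ≤ p)
    (ht : MemLp (M t) p μ) : MemLp (M s) p μ :=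
  (ht.condExp hp).ae_eq (hM.condExp_ae_eq hst)

variable {a b T : ι}

theorem Martingale.integrable_cube_add_mul_sub_condExp (hM : Martingale M F μ) (hab : a ≤ b)
    (hbT : b ≤ T) (hT : MemLp (M T) 3 μ) :
    Integrable (fun ω => (M b ω - M a ω) ^ 3 + 3 * (M b ω - M a ω) *
      ((μ[fun ω' => (M T ω' - M b ω') ^ 2|F b]) ω -
        (μ[fun ω' => (M T ω' - M a ω') ^ 2|F a]) ω)) μ := by
  have hMa := hM.memLp_of_le (hab.trans hbT) (by norm_num) hT
  have hMb := hM.memLp_of_le hbT (by norm_num) hT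
  simpa only [Pi.sub_apply, sub_add_sub_cancel'] using
    MeasureTheory.integrable_cube_add_mul_sub_condExp (m := F a) (m' := F b) (hMb.sub hMa)
      (hT.sub hMb)

theorem Martingale.integral_cube_add_mul_sub_condExp [IsFiniteMeasure μ] (hM : Martingale M F μ)
    (hab : a ≤ b) (hbT : b ≤ T) (hT : MemLp (M T) 3 μ) :
    ∫ ω, ((M b ω - M a ω) ^ 3 + 3 * (M b ω - M a ω) *
      ((μ[fun ω' => (M T ω' - M b ω') ^ 2|F b]) ω -
        (μ[fun ω' => (M T ω' - M a ω') ^ 2|F a]) ω)) ∂μ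
      = ∫ ω, (M T ω - M a ω) ^ 3 ∂μ - ∫ ω, (M T ω - M b ω) ^ 3 ∂μ := by
  have hMa := hM.memLp_of_le (hab.trans hbT) (by norm_num) hT
  have hMb := hM.memLp_of_le hbT (by norm_num) hT
  have hΔm : StronglyMeasurable[F b] (M b - M a) :=
    (hM.stronglyMeasurable b).sub ((hM.stronglyMeasurable a).mono (F.mono hab))
  simpa only [Pi.sub_apply, sub_add_sub_cancel'] using
    MeasureTheory.integral_cube_add_mul_sub_condExp (F.le a) (F.le b) hΔm (hMb.sub hMa)
      (hT.sub hMb) (hM.condExp_sub_ae_eq_zero hab) (hM.condExp_sub_ae_eq_zero hbT)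

end Martingale

end MeasureTheory

theorem realized_skewness_general {Ω : Type*} {m0 : MeasurableSpace Ω}
    (μ : Measure Ω) [IsProbabilityMeasure μ] (T : ℝ)
    (F : Filtration ℝ m0) (M : ℝ → Ω → ℝ) (hM : Martingale M F μ)
    (hM3 : MemLp (M T) 3 μ)
    (N : ℕ) (τ : ℕ → ℝ) (hτ0 : τ 0 = 0) (hτN : τ N = T)
    (hτ : ∀ j < N, τ j < τ (j + 1)) :
    ∫ ω, (∑ j ∈ Finset.range N,
        ((M (τ (j + 1)) ω - M (τ j) ω) ^ 3 +
          3 * (M (τ (j + 1)) ω - M (τ j) ω) *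
            ((μ[(fun ω' => (M T ω' - M (τ (j + 1)) ω') ^ 2)|F (τ (j + 1))]) ω -
              (μ[(fun ω' => (M T ω' - M (τ j) ω') ^ 2)|F (τ j)]) ω))) ∂μ
      = ∫ ω, (M T ω - M 0 ω) ^ 3 ∂μ := by
  have hτT : ∀ j ≤ N, τ j ≤ T := fun j hj => by
    induction hj using Nat.decreasingInduction with
    | self => exact hτN.le
    | of_succ k hk ih => exact (hτ k hk).le.trans ih
  have hstep : ∀ j ∈ range N, τ j ≤ τ (j + 1) ∧ τ (j + 1) ≤ T := fun j hj =>
    ⟨(hτ j (mem_range.1 hj)).le, hτT _ (mem_range.1 hj)⟩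
  rw [integral_finsetSum _ fun j hj =>
      hM.integrable_cube_add_mul_sub_condExp (hstep j hj).1 (hstep j hj).2 hM3,
    sum_congr rfl fun j hj =>
      hM.integral_cube_add_mul_sub_condExp (hstep j hj).1 (hstep j hj).2 hM3,
    sum_range_sub', hτ0, hτN]
  simp

/-- Realized skewness (Neuberger): for an `L³` martingale `M` on `[0,T]` with
`M⁽²⁾_t = E[(M_T − M_t)² | ℱ_t]` and any partition `0 = t_0 < ⋯ < t_N = T`,
`E[∑_j {(ΔM_j)³ + 3 ΔM_j ΔM⁽²⁾_j}] = E[(M_T − M_0)³]`. -/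
theorem realized_skewness {Ω : Type*} {m0 : MeasurableSpace Ω}
    (μ : Measure Ω) [IsProbabilityMeasure μ] (T : ℝ) (hT : 0 < T)
    (F : Filtration ℝ m0) (M : ℝ → Ω → ℝ) (hM : Martingale M F μ)
    (hM3 : MemLp (M T) 3 μ)
    (N : ℕ) (hN : 1 ≤ N) (τ : ℕ → ℝ) (hτ0 : τ 0 = 0) (hτN : τ N = T)
    (hτ : ∀ j < N, τ j < τ (j + 1)) :
    ∫ ω, (∑ j ∈ Finset.range N,
        ((M (τ (j + 1)) ω - M (τ j) ω) ^ 3 +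
          3 * (M (τ (j + 1)) ω - M (τ j) ω) *
            ((μ[(fun ω' => (M T ω' - M (τ (j + 1)) ω') ^ 2)|F (τ (j + 1))]) ω -
              (μ[(fun ω' => (M T ω' - M (τ j) ω') ^ 2)|F (τ j)]) ω))) ∂μ
      = ∫ ω, (M T ω - M 0 ω) ^ 3 ∂μ :=
  realized_skewness_general μ T F M hM hM3 N τ hτ0 hτN hτ
end
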